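/- Let A be a family of subspaces of an n-dimensional vector space over F_q containing no chain of l+1 distinct pairwise comparable subspaces (l-chain-free). Then the sum over a ∈ A of 1/[n choose dim(a)]_q is at most l. -/

import Mathlib

open Finset Submodule

/-- The `q`-factorial `n!_q = (q^n - 1)(q^(n-1) - 1) ⋯ (q - 1)`. -/
def qFact (q n : ℕ) : ℕ := ∏ i ∈ Finset.range n, (q ^ (i + 1) - 1)

/-- The Gaussian binomial coefficient `[n choose k]_q = n!_q / (k!_q (n-k)!_q)`. -/
noncomputable def gaussBinom (q n k : ℕ) : ℚ :=
  (qFact q n : ℚ) / ((qFact q k : ℚ) * (qFact q (n - k) : ℚ))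

/-- A family is `l`-chain-free if it contains no chain of length `l`, i.e. no `l + 1`
distinct pairwise comparable members. -/
def ChainFree {X : Type*} [PartialOrder X] (l : ℕ) (A : Set X) : Prop :=
  ¬ ∃ c : Fin (l + 1) → X, StrictMono c ∧ ∀ i, c i ∈ A

lemma qFact_pos {q : ℕ} (hq : 2 ≤ q) (m : ℕ) : 0 < qFact q m := by
  refine Finset.prod_pos fun i _ => ?_
  have : 2 ≤ q ^ (i + 1) := le_trans hq (Nat.le_self_pow (by omega) q)
  omega

lemma prodL (q m : ℕ) :
    ∏ i ∈ range m, (q ^ m - q ^ i) = q ^ (∑ i ∈ range m, i) * qFact q m := by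
  have h1 : ∏ i ∈ range m, (q ^ m - q ^ i)
      = ∏ i ∈ range m, (q ^ i * (q ^ (m - i) - 1)) := by
    refine Finset.prod_congr rfl fun i hi => ?_
    have hi' : i ≤ m := le_of_lt (mem_range.1 hi)
    have : q ^ i * q ^ (m - i) = q ^ m := by rw [← pow_add]; congr 1; omega
    rw [Nat.mul_sub, mul_one, this]
  rw [h1, Finset.prod_mul_distrib, Finset.prod_pow_eq_pow_sum]
  congr 1
  have := Finset.prod_range_reflect (fun j => q ^ (j + 1) - 1) m
  rw [qFact, ← this]
  refine Finset.prod_congr rfl fun j hj => ?_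
  have : j < m := mem_range.1 hj
  congr 2
  omega

lemma sum_split (k m : ℕ) :
    (∑ i ∈ range k, i) + (∑ i ∈ range m, i) + k * m = ∑ i ∈ range (k + m), i := by
  induction m with
  | zero => simp
  | succ m ih =>
    have h1 : k + (m+1) = (k+m) + 1 := by omega
    rw [h1, sum_range_succ, sum_range_succ, Nat.mul_succ]
    omega

lemma key_nat (q k m : ℕ) :
    ((∏ i ∈ range k, (q ^ k - q ^ i)) * ((∏ i ∈ range m, (q ^ m - q ^ i)) * q ^ (k * m)))
        * qFact q (k + m)
      = (∏ i ∈ range (k + m), (q ^ (k + m) - q ^ i)) * (qFact q k * qFact q m) := by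
  rw [prodL, prodL, prodL, ← sum_split k m, pow_add, pow_add]
  ring

lemma prodBig_pos {q : ℕ} (hq : 2 ≤ q) (m : ℕ) : 0 < ∏ i ∈ range m, (q ^ m - q ^ i) := by
  refine Finset.prod_pos fun i hi => ?_
  have : q ^ i < q ^ m := Nat.pow_lt_pow_right (by omega) (mem_range.1 hi)
  omega

section Count
variable {F V : Type*} [Field F] [AddCommGroup V] [Module F V] [FiniteDimensional F V]

/-- Splitting an independent tuple whose first block lies in `a`. -/
noncomputable def equivSplit (a : Submodule F V) (k m : ℕ) (hk : Module.finrank F a = k) :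
    {t : Fin k ⊕ Fin m → V // LinearIndependent F t ∧ ∀ i, t (Sum.inl i) ∈ a} ≃
      {u : Fin k → a // LinearIndependent F u} ×
        {w : Fin m → V // LinearIndependent F (a.mkQ ∘ w)} where
  toFun t :=
    (⟨fun i => ⟨t.1 (Sum.inl i), t.2.2 i⟩, by
        have h := (linearIndependent_sum.1 t.2.1).1
        exact LinearIndependent.of_comp a.subtype h⟩,
     ⟨fun j => t.1 (Sum.inr j), by
        obtain ⟨hl, hr, hd⟩ := linearIndependent_sum.1 t.2.1
        have hspan : Submodule.span F (Set.range (t.1 ∘ Sum.inl)) = a := by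
          have hle : Submodule.span F (Set.range (t.1 ∘ Sum.inl)) ≤ a :=
            Submodule.span_le.2 (by rintro x ⟨i, rfl⟩; exact t.2.2 i)
          refine Submodule.eq_of_le_of_finrank_le hle ?_
          rw [finrank_span_eq_card hl, hk, Fintype.card_fin]
        rw [hspan] at hd
        exact hr.map (by rw [Submodule.ker_mkQ]; exact hd.symm)⟩)
  invFun p :=
    ⟨Sum.elim (fun i => (p.1.1 i : V)) p.2.1, by
      rw [linearIndependent_sum]
      refine ⟨?_, ?_, ?_⟩
      · have := p.1.2.map' a.subtype (Submodule.ker_subtype a)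
        exact this
      · exact LinearIndependent.of_comp a.mkQ p.2.2
      · have hle : Submodule.span F (Set.range (Sum.elim (fun i => (p.1.1 i : V)) p.2.1 ∘ Sum.inl)) ≤ a := by
          refine Submodule.span_le.2 ?_
          rintro x ⟨i, rfl⟩; exact (p.1.1 i).2
        refine Disjoint.mono_left hle ?_
        rw [Submodule.disjoint_def]
        intro x hxa hxw
        rw [Sum.elim_comp_inr] at hxw
        rw [mem_span_range_iff_exists_fun F] at hxw
        obtain ⟨c, hc⟩ := hxw
        have h0 : ∑ i, c i • (a.mkQ ∘ p.2.1) i = 0 := by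
          have : a.mkQ x = 0 := by
            rw [Submodule.mkQ_apply, Submodule.Quotient.mk_eq_zero]; exact hxa
          calc ∑ i, c i • (a.mkQ ∘ p.2.1) i = a.mkQ (∑ i, c i • p.2.1 i) := by
                rw [map_sum]; simp
            _ = 0 := by rw [hc, this]
        have hz := Fintype.linearIndependent_iff.1 p.2.2 c h0
        rw [← hc]
        simp [hz], fun i => (p.1.1 i).2⟩
  left_inv t := Subtype.ext (funext fun x => by cases x <;> rfl)
  right_inv p := Prod.ext (Subtype.ext (funext fun i => Subtype.ext rfl)) (Subtype.ext rfl)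

/-- Lifting tuples along a linear section of the quotient map. -/
noncomputable def equivSection (a : Submodule F V) (m : ℕ) (σ : (V ⧸ a) →ₗ[F] V)
    (hσ : ∀ x, a.mkQ (σ x) = x) :
    {w : Fin m → V // LinearIndependent F (a.mkQ ∘ w)} ≃
      {t : Fin m → V ⧸ a // LinearIndependent F t} × (Fin m → a) where
  toFun w :=
    (⟨a.mkQ ∘ w.1, w.2⟩, fun j => ⟨w.1 j - σ (a.mkQ (w.1 j)), by
      have h : a.mkQ (w.1 j - σ (a.mkQ (w.1 j))) = 0 := by rw [map_sub, hσ, sub_self]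
      rwa [Submodule.mkQ_apply, Submodule.Quotient.mk_eq_zero] at h⟩)
  invFun p :=
    ⟨fun j => σ (p.1.1 j) + (p.2 j : V), by
      have he : (a.mkQ ∘ fun j => σ (p.1.1 j) + (p.2 j : V)) = p.1.1 := by
        funext j
        have hz : a.mkQ (p.2 j : V) = 0 := by
          rw [Submodule.mkQ_apply, Submodule.Quotient.mk_eq_zero]; exact (p.2 j).2
        simp [map_add, hσ, hz]
      rw [he]; exact p.1.2⟩
  left_inv w := Subtype.ext (funext fun j => by simp)
  right_inv p := by
    have hz : ∀ j, a.mkQ (p.2 j : V) = 0 := fun j => by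
      rw [Submodule.mkQ_apply, Submodule.Quotient.mk_eq_zero]; exact (p.2 j).2
    refine Prod.ext (Subtype.ext (funext fun j => ?_)) (funext fun j => Subtype.ext ?_)
    · show a.mkQ (σ (p.1.1 j) + (p.2 j : V)) = p.1.1 j
      simp [map_add, hσ, hz j]
    · show (σ (p.1.1 j) + (p.2 j : V)) - σ (a.mkQ (σ (p.1.1 j) + (p.2 j : V))) = (p.2 j : V)
      simp [map_add, hσ, hz j]

end Count


section Reindex
variable {F V : Type*} [Field F] [AddCommGroup V] [Module F V]

noncomputable def equivReindex (a : Submodule F V) (k m n : ℕ) (h : k + m = n) :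
    {s : Fin n → V // LinearIndependent F s ∧ ∀ j : Fin n, (j : ℕ) < k → s j ∈ a} ≃
      {t : Fin k ⊕ Fin m → V // LinearIndependent F t ∧ ∀ i, t (Sum.inl i) ∈ a} := by
  set e : Fin k ⊕ Fin m ≃ Fin n := finSumFinEquiv.trans (finCongr h) with he
  have hvl : ∀ i : Fin k, ((e (Sum.inl i)) : ℕ) = (i : ℕ) := fun i => by
    simp [he]
  refine
    { toFun := fun s => ⟨s.1 ∘ e, (linearIndependent_equiv e).2 s.2.1, fun i =>
        s.2.2 (e (Sum.inl i)) (by rw [hvl i]; exact i.2)⟩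
      invFun := fun t => ⟨t.1 ∘ e.symm, (linearIndependent_equiv e.symm).2 t.2.1, fun j hj => ?_⟩
      left_inv := fun s => Subtype.ext (funext fun j => by simp)
      right_inv := fun t => Subtype.ext (funext fun x => by simp) }
  have hj' : e.symm j = Sum.inl ⟨(j : ℕ), hj⟩ := by
    apply e.injective
    rw [Equiv.apply_symm_apply]
    exact Fin.ext (hvl ⟨(j : ℕ), hj⟩).symm
  show t.1 (e.symm j) ∈ a
  rw [hj']
  exact t.2.2 _

end Reindex

section Card
variable {F V : Type*} [Field F] [Fintype F] [AddCommGroup V] [Module F V] [FiniteDimensional F V]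

lemma card_pred (a : Submodule F V) :
    Nat.card {s : Fin (Module.finrank F V) → V // LinearIndependent F s ∧
        ∀ j : Fin (Module.finrank F V), (j : ℕ) < Module.finrank F a → s j ∈ a} =
      (∏ i ∈ range (Module.finrank F a),
          (Fintype.card F ^ (Module.finrank F a) - Fintype.card F ^ i)) *
        ((∏ i ∈ range (Module.finrank F V - Module.finrank F a),
            (Fintype.card F ^ (Module.finrank F V - Module.finrank F a) - Fintype.card F ^ i)) *
          Fintype.card F ^ (Module.finrank F a * (Module.finrank F V - Module.finrank F a))) := by
  classical
  haveI : Finite V := Module.finite_of_finite F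
  set q := Fintype.card F
  set n := Module.finrank F V with hn
  set k := Module.finrank F a with hk
  have hkn : k ≤ n := Submodule.finrank_le a
  set m := n - k with hm
  haveI : Finite (V ⧸ a) := Module.finite_of_finite F
  haveI : Finite a := Module.finite_of_finite F
  have hq : Module.finrank F (V ⧸ a) = m := by
    have := Submodule.finrank_quotient_add_finrank a
    omega
  obtain ⟨σ, hσ⟩ := a.mkQ.exists_rightInverse_of_surjective (Submodule.range_mkQ a)
  have hσ' : ∀ x, a.mkQ (σ x) = x := fun x => by
    have := LinearMap.congr_fun hσ x
    simpa using this
  rw [Nat.card_congr (equivReindex a k m n (by omega))]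
  rw [Nat.card_congr (equivSplit a k m rfl)]
  rw [Nat.card_prod]
  rw [Nat.card_congr (equivSection a m σ hσ')]
  rw [Nat.card_prod, Nat.card_fun]
  have c1 : Nat.card {u : Fin k → a // LinearIndependent F u} =
      ∏ i ∈ range k, (q ^ k - q ^ i) := by
    rw [card_linearIndependent (le_of_eq hk.symm)]
    rw [← hk]
    exact Fin.prod_univ_eq_prod_range (fun i => q ^ k - q ^ i) k
  have c2 : Nat.card {t : Fin m → V ⧸ a // LinearIndependent F t} =
      ∏ i ∈ range m, (q ^ m - q ^ i) := by
    rw [card_linearIndependent (le_of_eq hq.symm)]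
    rw [hq]
    exact Fin.prod_univ_eq_prod_range (fun i => q ^ m - q ^ i) m
  have c3 : Nat.card a = q ^ k := by
    haveI : Fintype V := Fintype.ofFinite V
    rw [Nat.card_eq_fintype_card]
    exact Module.card_eq_pow_finrank
  rw [c1, c2, c3, Nat.card_eq_fintype_card, Fintype.card_fin]
  ring
end Card


section Chain
variable {F V : Type*} [Field F] [AddCommGroup V] [Module F V] [FiniteDimensional F V]

lemma chain_bound (l : ℕ) (𝒜 : Finset (Submodule F V)) (hcf : ChainFree l (𝒜 : Set (Submodule F V)))
    {s : Fin (Module.finrank F V) → V} (hs : LinearIndependent F s)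
    [DecidablePred fun a : Submodule F V =>
      ∀ j : Fin (Module.finrank F V), (j : ℕ) < Module.finrank F a → s j ∈ a] :
    (𝒜.filter fun a : Submodule F V =>
      ∀ j : Fin (Module.finrank F V), (j : ℕ) < Module.finrank F a → s j ∈ a).card
      ≤ l := by
  classical
  set 𝒜' := 𝒜.filter fun a : Submodule F V =>
    ∀ j : Fin (Module.finrank F V), (j : ℕ) < Module.finrank F a → s j ∈ a with h𝒜'
  by_contra hcon
  push_neg at hcon
  set C : ℕ → Submodule F V :=
    fun t => Submodule.span F (s '' {j : Fin (Module.finrank F V) | (j : ℕ) < t}) with hC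
  have hCa : ∀ a ∈ 𝒜', C (Module.finrank F a) = a := by
    intro a ha
    rw [h𝒜', mem_filter] at ha
    obtain ⟨ha𝒜, hpred⟩ := ha
    have hkn : Module.finrank F a ≤ Module.finrank F V := Submodule.finrank_le a
    have hle : C (Module.finrank F a) ≤ a := by
      rw [hC]
      refine Submodule.span_le.2 ?_
      rintro x ⟨j, hj, rfl⟩
      exact hpred j hj
    have himg : s '' {j : Fin (Module.finrank F V) | (j : ℕ) < Module.finrank F a} =
        Set.range (s ∘ Fin.castLE hkn) := by
      ext x
      constructor
      · rintro ⟨j, hj, rfl⟩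
        exact ⟨⟨(j : ℕ), hj⟩, congrArg s (Fin.ext rfl)⟩
      · rintro ⟨i, rfl⟩
        exact ⟨Fin.castLE hkn i, i.2, rfl⟩
    have hrank : Module.finrank F (C (Module.finrank F a)) = Module.finrank F a := by
      have h2 : C (Module.finrank F a) = Submodule.span F (Set.range (s ∘ Fin.castLE hkn)) := by
        rw [hC]; exact congrArg _ himg
      rw [h2, finrank_span_eq_card (hs.comp _ (Fin.castLE_injective hkn)), Fintype.card_fin]
    exact Submodule.eq_of_le_of_finrank_le hle (by rw [hrank])
  have hCst : ∀ t t' : ℕ, t < t' → t' ≤ Module.finrank F V → C t < C t' := by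
    intro t t' htt' ht'
    have hle : C t ≤ C t' :=
      Submodule.span_mono (Set.image_mono (fun j hj => lt_trans hj htt'))
    have htn : t < Module.finrank F V := lt_of_lt_of_le htt' ht'
    have hmem : s ⟨t, htn⟩ ∈ C t' :=
      Submodule.subset_span ⟨⟨t, htn⟩, htt', rfl⟩
    have hnmem : s ⟨t, htn⟩ ∉ C t := by
      rw [hC]
      exact hs.notMem_span_image
        (s := {j : Fin (Module.finrank F V) | (j : ℕ) < t}) (x := ⟨t, htn⟩) (by simp)
    exact lt_of_le_of_ne hle (fun h => hnmem (h ▸ hmem))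
  have hinj : Set.InjOn (fun a : Submodule F V => Module.finrank F a) ↑𝒜' := by
    intro a ha b hb hab
    rw [← hCa a ha, ← hCa b hb]
    simp only at hab
    rw [hab]
  set K := 𝒜'.image (fun a : Submodule F V => Module.finrank F a) with hK
  have hKcard : K.card = 𝒜'.card := Finset.card_image_of_injOn hinj
  have hKn : ∀ x ∈ K, x ≤ Module.finrank F V := by
    intro x hx
    rw [hK, mem_image] at hx
    obtain ⟨a, _, rfl⟩ := hx
    exact Submodule.finrank_le a
  obtain ⟨K', hK'sub, hK'card⟩ := Finset.exists_subset_card_eq (show l + 1 ≤ K.card by omega)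
  set e := K'.orderIsoOfFin hK'card with he
  refine hcf ⟨fun i => C ((e i : K') : ℕ), ?_, ?_⟩
  · intro i i' hii'
    have h1 : ((e i : K') : ℕ) < ((e i' : K') : ℕ) := by
      have := e.strictMono hii'
      exact_mod_cast this
    exact hCst _ _ h1 (hKn _ (hK'sub (e i').2))
  · intro i
    have hx : ((e i : K') : ℕ) ∈ K := hK'sub (e i).2
    rw [hK, mem_image] at hx
    obtain ⟨a, ha, hfa⟩ := hx
    simp only
    rw [← hfa, hCa a ha]
    rw [h𝒜', mem_filter] at ha
    exact ha.1
end Chain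
/-- Rota–Harper LYM inequality: for an `l`-chain-free family `𝒜` of subspaces of an
`n`-dimensional vector space over `F_q`, `∑_{a ∈ 𝒜} 1/[n choose dim a]_q ≤ l`. -/
theorem rota_harper_lym (q n l : ℕ) (F : Type*) [Field F] [Fintype F]
    (hq : Fintype.card F = q) (V : Type*) [AddCommGroup V] [Module F V]
    [FiniteDimensional F V] (hn : Module.finrank F V = n)
    (𝒜 : Finset (Submodule F V)) (hcf : ChainFree l (𝒜 : Set (Submodule F V))) :
    ∑ a ∈ 𝒜, 1 / gaussBinom q n (Module.finrank F a) ≤ (l : ℚ) := by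
  classical
  subst hq hn
  set q := Fintype.card F with hq
  set n := Module.finrank F V with hn
  have hq2 : 2 ≤ q := Fintype.one_lt_card
  haveI : Finite V := Module.finite_of_finite F
  haveI : Fintype V := Fintype.ofFinite V
  set Ln := ∏ i ∈ Finset.range n, (q ^ n - q ^ i) with hLn
  have hLnpos : 0 < Ln := prodBig_pos hq2 n
  -- the number of independent tuples
  have hB : Fintype.card {s : Fin n → V // LinearIndependent F s} = Ln := by
    rw [← Nat.card_eq_fintype_card, card_linearIndependent (le_refl n), hLn]
    exact Fin.prod_univ_eq_prod_range (fun i => q ^ n - q ^ i) n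
  -- the weight of a subspace
  set N : Submodule F V → ℕ := fun a =>
    (∏ i ∈ Finset.range (Module.finrank F a),
        (q ^ (Module.finrank F a) - q ^ i)) *
      ((∏ i ∈ Finset.range (n - Module.finrank F a),
          (q ^ (n - Module.finrank F a) - q ^ i)) *
        q ^ (Module.finrank F a * (n - Module.finrank F a))) with hN
  -- step A: per-subspace count
  have stepA : ∀ a : Submodule F V,
      (Finset.univ.filter fun s : {s : Fin n → V // LinearIndependent F s} =>
        ∀ j : Fin n, (j : ℕ) < Module.finrank F a → s.1 j ∈ a).card = N a := by
    intro a
    rw [← Fintype.card_subtype, ← Nat.card_eq_fintype_card]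
    rw [Nat.card_congr (Equiv.subtypeSubtypeEquivSubtypeInter
      (fun s : Fin n → V => LinearIndependent F s)
      (fun s : Fin n → V => ∀ j : Fin n, (j : ℕ) < Module.finrank F a → s j ∈ a))]
    exact card_pred a
  -- step B+C: double counting
  have stepBC : ∑ a ∈ 𝒜, N a ≤ l * Ln := by
    have hdc : ∑ a ∈ 𝒜, N a =
        ∑ s : {s : Fin n → V // LinearIndependent F s},
          (𝒜.filter fun a : Submodule F V =>
            ∀ j : Fin n, (j : ℕ) < Module.finrank F a → s.1 j ∈ a).card := by
      rw [Finset.sum_congr rfl (fun a _ => (stepA a).symm)]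
      simp only [Finset.card_filter]
      rw [Finset.sum_comm]
    rw [hdc]
    calc ∑ s : {s : Fin n → V // LinearIndependent F s},
          (𝒜.filter fun a : Submodule F V =>
            ∀ j : Fin n, (j : ℕ) < Module.finrank F a → s.1 j ∈ a).card
        ≤ ∑ _s : {s : Fin n → V // LinearIndependent F s}, l := by
          refine Finset.sum_le_sum fun s _ => ?_
          exact chain_bound l 𝒜 hcf s.2
      _ = l * Ln := by rw [Finset.sum_const, Finset.card_univ, hB, smul_eq_mul, mul_comm]
  -- step D: the rational identity
  have stepD : ∀ a ∈ 𝒜, 1 / gaussBinom q n (Module.finrank F a) = (N a : ℚ) / (Ln : ℚ) := by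
    intro a _
    set k := Module.finrank F a with hk
    have hkn : k ≤ n := Submodule.finrank_le a
    have hFn : (0 : ℚ) < (qFact q n : ℚ) := by exact_mod_cast qFact_pos hq2 n
    have hFk : (0 : ℚ) < (qFact q k : ℚ) := by exact_mod_cast qFact_pos hq2 k
    have hFm : (0 : ℚ) < (qFact q (n - k) : ℚ) := by exact_mod_cast qFact_pos hq2 (n - k)
    have hkey := key_nat q k (n - k)
    rw [show k + (n - k) = n by omega] at hkey
    rw [gaussBinom, one_div_div]
    rw [div_eq_div_iff (by positivity) (by exact_mod_cast hLnpos.ne')]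
    have hQ : (N a : ℚ) * (qFact q n : ℚ) =
        (Ln : ℚ) * ((qFact q k : ℚ) * (qFact q (n - k) : ℚ)) := by exact_mod_cast hkey
    linear_combination -hQ
  rw [Finset.sum_congr rfl stepD, ← Finset.sum_div]
  rw [div_le_iff₀ (by exact_mod_cast hLnpos)]
  have : ((∑ a ∈ 𝒜, N a : ℕ) : ℚ) ≤ ((l * Ln : ℕ) : ℚ) := by exact_mod_cast stepBC
  push_cast at this ⊢
  linarith
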